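/- arXiv:0803.2643 — 2 statements merged into one kernel-verified Lean document; each statement's English description precedes it below -/
import Mathlib

section
/- Asymptotic unitarity forces the Lindblad form of the zeroth block: let d ≥ 1, m ≥ 2, and for each n ∈ ℕ let U(n) be a unitary (m·d)×(m·d) complex matrix with m×m block decomposition (L_{ij}(n))_{0≤i,j≤m−1} into d×d blocks. Assume that n·(L_{00}(n) − I) converges to a matrix G and that √n·L_{i0}(n) converges to a matrix L_i for each i = 1,…,m−1 (convergence in norm). Then G + G* + Σ_{i=1}^{m−1} L_i*·L_i = 0; equivalently, setting H = (i/2)·(G − G*), the matrix H is self-adjoint and G = −i·H − (1/2)·Σ_{i=1}^{m−1} L_i*·L_i. -/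
open Matrix Filter
open scoped ComplexOrder

/-- The `(i,j)` block (a `d×d` matrix) of an `(m·d)×(m·d)` matrix, under the Kronecker
identification of `ℂ^m ⊗ ℂ^d` with `ℂ^{m·d}` (first factor slow). -/
def blockOf {m d : ℕ} (A : Matrix (Fin m × Fin d) (Fin m × Fin d) ℂ) (i j : Fin m) :
    Matrix (Fin d) (Fin d) ℂ :=
  Matrix.of fun a b => A (i, a) (j, b)

/-! Unitarity of `U(n)` makes its zeroth block column an isometry, `∑ₖ L_{k0}ᴴ L_{k0} = 1`.
Writing `L₀₀ = 1 + A/n` and multiplying by `n` gives the exact identity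
`∑_{i≠0} (√n L_{i0})ᴴ (√n L_{i0}) = -(A + Aᴴ + Aᴴ A / n)`, whose two sides converge to
`∑_{i≠0} L_iᴴ L_i` and `-(G + Gᴴ)` respectively. -/

open scoped Topology

section StarAlgebra

variable {𝕜 R : Type*} [RCLike 𝕜] [Ring R] [StarRing R] [Algebra 𝕜 R] [StarModule 𝕜 R]

theorem natCast_smul_one_sub_star_mul_self (n : ℕ) (x : R) :
    (n : 𝕜) • (1 - star x * x) =
      -((n : 𝕜) • (x - 1) + star ((n : 𝕜) • (x - 1))
        + (n : 𝕜)⁻¹ • (star ((n : 𝕜) • (x - 1)) * ((n : 𝕜) • (x - 1)))) := by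
  rcases eq_or_ne n 0 with rfl | hn
  · simp
  have hn : (n : 𝕜) ≠ 0 := Nat.cast_ne_zero.2 hn
  simp only [star_smul, star_natCast, star_sub, star_one, smul_mul_smul_comm, smul_smul,
    inv_mul_cancel_left₀ hn]
  noncomm_ring
  module

variable [TopologicalSpace R] [IsTopologicalRing R] [ContinuousStar R] [ContinuousSMul 𝕜 R]

theorem tendsto_natCast_smul_one_sub_star_mul_self {x : ℕ → R} {G : R}
    (hG : Tendsto (fun n : ℕ => (n : 𝕜) • (x n - 1)) atTop (𝓝 G)) :
    Tendsto (fun n : ℕ => (n : 𝕜) • (1 - star (x n) * x n)) atTop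
      (𝓝 (-(G + star G))) := by
  simp_rw [natCast_smul_one_sub_star_mul_self]
  set A : ℕ → R := fun n => (n : 𝕜) • (x n - 1)
  have hquad : Tendsto (fun n : ℕ => (n : 𝕜)⁻¹ • (star (A n) * A n)) atTop (𝓝 0) := by
    simpa using (tendsto_inv_atTop_nhds_zero_nat (𝕜 := 𝕜)).smul (hG.star.mul hG)
  simpa only [add_zero] using ((hG.add hG.star).add hquad).neg

end StarAlgebra

section ComplexStarModule

open Complex

variable {R : Type*} [AddCommGroup R] [StarAddMonoid R] [Module ℂ R]

theorem isSelfAdjoint_I_div_two_smul_sub_star [StarModule ℂ R] (x : R) :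
    IsSelfAdjoint ((I / 2) • (x - star x)) := by
  simp only [IsSelfAdjoint, star_smul, star_sub, star_star, star_div₀, star_def, conj_I,
    star_ofNat]
  module

theorem eq_neg_I_smul_sub_half_smul_of_add_star_add_eq_zero {x s : R}
    (h : x + star x + s = 0) :
    x = -I • ((I / 2) • (x - star x)) - (1 / 2 : ℂ) • s := by
  have hI : -I * (I / 2) = 1 / 2 := by linear_combination (-1 / 2 : ℂ) * I_sq
  rw [smul_smul, hI, eq_neg_of_add_eq_zero_right h]
  module

end ComplexStarModule

theorem star_ofReal_sqrt_smul_mul_self {R : Type*} [Ring R] [StarRing R] [Algebra ℂ R]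
    [StarModule ℂ R] {r : ℝ} (hr : 0 ≤ r) (x : R) :
    star ((√r : ℂ) • x) * ((√r : ℂ) • x) = (r : ℂ) • (star x * x) := by
  rw [star_smul, Complex.star_def, Complex.conj_ofReal, smul_mul_smul_comm,
    ← Complex.ofReal_mul, Real.mul_self_sqrt hr]

section Blocks

variable {m d : ℕ}

theorem blockOf_conjTranspose_mul (A B : Matrix (Fin m × Fin d) (Fin m × Fin d) ℂ)
    (i j : Fin m) :
    blockOf (Aᴴ * B) i j = ∑ k, (blockOf A k i)ᴴ * blockOf B k j := by
  ext a b
  simp [blockOf, Matrix.mul_apply, Matrix.sum_apply, Fintype.sum_prod_type]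

theorem sum_erase_conjTranspose_mul_blockOf_of_mem_unitaryGroup
    {U : Matrix (Fin m × Fin d) (Fin m × Fin d) ℂ}
    (hU : U ∈ unitaryGroup (Fin m × Fin d) ℂ)
    (j k : Fin m) :
    ∑ i ∈ Finset.univ.erase k, (blockOf U i j)ᴴ * blockOf U i j =
      1 - (blockOf U k j)ᴴ * blockOf U k j := by
  have hcol : ∑ i, (blockOf U i j)ᴴ * blockOf U i j = 1 := by
    rw [← blockOf_conjTranspose_mul, ← star_eq_conjTranspose, Unitary.star_mul_self_of_mem hU]
    ext a b
    simp [blockOf, Matrix.one_apply]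
  rw [← hcol, ← Finset.add_sum_erase _ _ (Finset.mem_univ k), add_sub_cancel_left]

end Blocks

theorem asymptotic_unitarity_lindblad_form_general (d m : ℕ) [NeZero m]
    (U : ℕ → Matrix (Fin m × Fin d) (Fin m × Fin d) ℂ)
    (hU : ∀ n, U n ∈ Matrix.unitaryGroup (Fin m × Fin d) ℂ)
    (G : Matrix (Fin d) (Fin d) ℂ) (L : Fin m → Matrix (Fin d) (Fin d) ℂ)
    (hG : Tendsto (fun n : ℕ => (n : ℂ) • (blockOf (U n) 0 0 - 1)) atTop (nhds G))
    (hL : ∀ i : Fin m, i ≠ 0 →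
      Tendsto (fun n : ℕ => ((Real.sqrt n : ℝ) : ℂ) • blockOf (U n) i 0) atTop (nhds (L i))) :
    G + Gᴴ + ∑ i ∈ Finset.univ.erase (0 : Fin m), (L i)ᴴ * L i = 0
    ∧ ((Complex.I / 2) • (G - Gᴴ))ᴴ = (Complex.I / 2) • (G - Gᴴ)
    ∧ G = (-Complex.I) • ((Complex.I / 2) • (G - Gᴴ))
          - (1 / 2 : ℂ) • ∑ i ∈ Finset.univ.erase (0 : Fin m), (L i)ᴴ * L i := by
  have hcol (n : ℕ) :
      ∑ i ∈ Finset.univ.erase 0,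
          star ((√n : ℂ) • blockOf (U n) i 0) * ((√n : ℂ) • blockOf (U n) i 0)
        = (n : ℂ) • (1 - star (blockOf (U n) 0 0) * blockOf (U n) 0 0) := by
    simp_rw [star_ofReal_sqrt_smul_mul_self n.cast_nonneg, ← Finset.smul_sum,
      Complex.ofReal_natCast]
    exact congrArg _ (sum_erase_conjTranspose_mul_blockOf_of_mem_unitaryGroup (hU n) 0 0)
  have hsum : ∑ i ∈ Finset.univ.erase (0 : Fin m), (L i)ᴴ * L i = -(G + Gᴴ) := by
    refine tendsto_nhds_unique ?_ (tendsto_natCast_smul_one_sub_star_mul_self hG)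
    simp_rw [← hcol]
    exact tendsto_finsetSum _ fun i hi =>
      (hL i (Finset.ne_of_mem_erase hi)).star.mul (hL i (Finset.ne_of_mem_erase hi))
  have hlindblad : G + Gᴴ + ∑ i ∈ Finset.univ.erase (0 : Fin m), (L i)ᴴ * L i = 0 := by
    rw [hsum, add_neg_cancel]
  exact ⟨hlindblad, isSelfAdjoint_I_div_two_smul_sub_star G,
    eq_neg_I_smul_sub_half_smul_of_add_star_add_eq_zero hlindblad⟩

/-- Asymptotic unitarity forces the Lindblad form of the zeroth block: if `U(n)` are unitary
with blocks `L_{ij}(n)`, `n·(L₀₀(n) − I) → G` and `√n·L_{i0}(n) → L_i` for `i ≠ 0`, then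
`G + G* + Σ_{i≠0} L_i*·L_i = 0`; equivalently, `H := (i/2)·(G − G*)` is self-adjoint and
`G = −i·H − (1/2)·Σ_{i≠0} L_i*·L_i`. -/
theorem asymptotic_unitarity_lindblad_form (d m : ℕ) [NeZero m] (hd : 1 ≤ d) (hm : 2 ≤ m)
    (U : ℕ → Matrix (Fin m × Fin d) (Fin m × Fin d) ℂ)
    (hU : ∀ n, U n ∈ Matrix.unitaryGroup (Fin m × Fin d) ℂ)
    (G : Matrix (Fin d) (Fin d) ℂ) (L : Fin m → Matrix (Fin d) (Fin d) ℂ)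
    (hG : Tendsto (fun n : ℕ => (n : ℂ) • (blockOf (U n) 0 0 - 1)) atTop (nhds G))
    (hL : ∀ i : Fin m, i ≠ 0 →
      Tendsto (fun n : ℕ => ((Real.sqrt n : ℝ) : ℂ) • blockOf (U n) i 0) atTop (nhds (L i))) :
    G + Gᴴ + ∑ i ∈ Finset.univ.erase (0 : Fin m), (L i)ᴴ * L i = 0
    ∧ ((Complex.I / 2) • (G - Gᴴ))ᴴ = (Complex.I / 2) • (G - Gᴴ)
    ∧ G = (-Complex.I) • ((Complex.I / 2) • (G - Gᴴ))
          - (1 / 2 : ℂ) • ∑ i ∈ Finset.univ.erase (0 : Fin m), (L i)ᴴ * L i :=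
  asymptotic_unitarity_lindblad_form_general d m U hU G L hG hL
end

section
/- Finite-horizon dynamic programming for discrete controlled quantum trajectories: define the value functions by backward recursion V^N(ρ) = φ(ρ) and V^k(ρ) = min_{u∈𝒰} { c(k, ρ, u) + t₀(k,u,ρ)·V^{k+1}(H₀(k,u,ρ)) + t₁(k,u,ρ)·V^{k+1}(H₁(k,u,ρ)) } for 0 ≤ k ≤ N−1 (each V^k is continuous on S and the minimum is attained). Then (i) for every history-dependent strategy u, V^0(ρ) ≤ J_u^0(∅, ρ), i.e. V^0(ρ) is a lower bound for the expected total cost of every strategy; and (ii) there exist functions u*_k : S → 𝒰 with u*_k(ρ) ∈ argmin of the Bellman expression at step k, such that the Markovian strategy which at step k on history w applies u*_k to the current state achieves J_{u*}^0(∅, ρ) = V^0(ρ). Hence V^0(ρ) equals the minimum of the expected cost over all strategies, and the minimum is attained by a Markovian strategy. -/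
/-!
Backward induction on the number of remaining steps: `V k ρ` is at most the Bellman expression
of whatever control the strategy applies, and by induction the continuation costs dominate
`V (k + 1)` at the post-measurement states, which are again states since the outcome
probabilities are positive. The same induction with equalities shows that a pointwise
minimiser of the Bellman expression, applied to the current state, attains `V`.
-/

open Matrix
open scoped ComplexOrder

/-- A state (density matrix): a positive semidefinite complex matrix of trace 1. -/
def IsState {n : Type*} [Fintype n] (ρ : Matrix n n ℂ) : Prop :=
  ρ.PosSemidef ∧ ρ.trace = 1

/-- Transition probability `t(L, ρ) = Tr[L·ρ·L*]` (real part of the trace). -/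
noncomputable def transProb (L ρ : Matrix (Fin 2) (Fin 2) ℂ) : ℝ :=
  ((L * ρ * Lᴴ).trace).re

/-- Post-measurement state `H(L, ρ) = L·ρ·L* / Tr[L·ρ·L*]`. -/
noncomputable def postState (L ρ : Matrix (Fin 2) (Fin 2) ℂ) : Matrix (Fin 2) (Fin 2) ℂ :=
  ((L * ρ * Lᴴ).trace)⁻¹ • (L * ρ * Lᴴ)

/-- The expected total cost `J_u^k(w, ρ)` of a history-dependent strategy, by backward
recursion; the first argument is the number `N − k` of remaining steps, the second is the
current stage `k`, the third the binary history `w`, the fourth the current state. -/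
noncomputable def expCost {𝒰 : Type*} (L0 L1 : ℕ → 𝒰 → Matrix (Fin 2) (Fin 2) ℂ)
    (c : ℕ → Matrix (Fin 2) (Fin 2) ℂ → 𝒰 → ℝ) (φ : Matrix (Fin 2) (Fin 2) ℂ → ℝ)
    (strat : ℕ → List Bool → 𝒰) :
    ℕ → ℕ → List Bool → Matrix (Fin 2) (Fin 2) ℂ → ℝ
  | 0, _, _, ρ => φ ρ
  | n + 1, k, w, ρ =>
      c k ρ (strat k w)
        + transProb (L0 k (strat k w)) ρ *
            expCost L0 L1 c φ strat n (k + 1) (w ++ [false]) (postState (L0 k (strat k w)) ρ)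
        + transProb (L1 k (strat k w)) ρ *
            expCost L0 L1 c φ strat n (k + 1) (w ++ [true]) (postState (L1 k (strat k w)) ρ)

/-- The state reached from `ρ` at stage `k` along the binary history `w` when a Markovian
policy `pol` is applied. -/
noncomputable def evolveState {𝒰 : Type*} (L0 L1 : ℕ → 𝒰 → Matrix (Fin 2) (Fin 2) ℂ)
    (pol : ℕ → Matrix (Fin 2) (Fin 2) ℂ → 𝒰) :
    ℕ → List Bool → Matrix (Fin 2) (Fin 2) ℂ → Matrix (Fin 2) (Fin 2) ℂ
  | _, [], ρ => ρ
  | k, i :: w, ρ =>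
      evolveState L0 L1 pol (k + 1) w (postState ((if i then L1 k else L0 k) (pol k ρ)) ρ)

/-- The Bellman expression `c(k,ρ,u) + Σ_i t_i(k,u,ρ)·V^{k+1}(H_i(k,u,ρ))`. -/
noncomputable def bellman {𝒰 : Type*} (L0 L1 : ℕ → 𝒰 → Matrix (Fin 2) (Fin 2) ℂ)
    (c : ℕ → Matrix (Fin 2) (Fin 2) ℂ → 𝒰 → ℝ)
    (Vnext : Matrix (Fin 2) (Fin 2) ℂ → ℝ)
    (k : ℕ) (ρ : Matrix (Fin 2) (Fin 2) ℂ) (u : 𝒰) : ℝ :=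
  c k ρ u + transProb (L0 k u) ρ * Vnext (postState (L0 k u) ρ)
    + transProb (L1 k u) ρ * Vnext (postState (L1 k u) ρ)

theorem isState_inv_trace_smul {n : Type*} [Fintype n] {A : Matrix n n ℂ}
    (hA : A.PosSemidef) (htr : A.trace ≠ 0) : IsState (A.trace⁻¹ • A) :=
  ⟨hA.smul (inv_nonneg_of_nonneg hA.trace_nonneg), by
    rw [trace_smul, smul_eq_mul, inv_mul_cancel₀ htr]⟩

theorem isState_postState {L ρ : Matrix (Fin 2) (Fin 2) ℂ} (hρ : IsState ρ)
    (ht : 0 < transProb L ρ) : IsState (postState L ρ) :=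
  isState_inv_trace_smul (hρ.1.mul_mul_conjTranspose_same L) fun h ↦
    ht.ne' (by simp [transProb, h])

section DynamicProgramming

variable {𝒰 : Type*} {L0 L1 : ℕ → 𝒰 → Matrix (Fin 2) (Fin 2) ℂ}
  {c : ℕ → Matrix (Fin 2) (Fin 2) ℂ → 𝒰 → ℝ} {φ : Matrix (Fin 2) (Fin 2) ℂ → ℝ}
  {V : ℕ → Matrix (Fin 2) (Fin 2) ℂ → ℝ} {N : ℕ}

theorem evolveState_append_singleton (pol : ℕ → Matrix (Fin 2) (Fin 2) ℂ → 𝒰)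
    (w : List Bool) (i : Bool) (k : ℕ) (ρ : Matrix (Fin 2) (Fin 2) ℂ) :
    evolveState L0 L1 pol k (w ++ [i]) ρ
      = postState ((if i then L1 (k + w.length) else L0 (k + w.length))
          (pol (k + w.length) (evolveState L0 L1 pol k w ρ)))
          (evolveState L0 L1 pol k w ρ) := by
  induction w generalizing k ρ with
  | nil => simp [evolveState]
  | cons j w ih =>
    simp only [List.cons_append, evolveState, ih, List.length_cons]
    rw [Nat.add_right_comm, Nat.add_assoc]

theorem value_le_expCost (hVN : ∀ ρ, V N ρ = φ ρ)
    (hpos : ∀ k u ρ, IsState ρ → 0 < transProb (L0 k u) ρ ∧ 0 < transProb (L1 k u) ρ)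
    (hVleast : ∀ k, k < N → ∀ ρ, IsState ρ →
      IsLeast (Set.range (bellman L0 L1 c (V (k + 1)) k ρ)) (V k ρ))
    (strat : ℕ → List Bool → 𝒰) :
    ∀ n k, k + n = N → ∀ w ρ, IsState ρ → V k ρ ≤ expCost L0 L1 c φ strat n k w ρ
  | 0, k, hk, w, ρ, _ => by
    obtain rfl : k = N := by omega
    simp [expCost, hVN]
  | n + 1, k, hk, w, ρ, hρ => by
    obtain ⟨ht0, ht1⟩ := hpos k (strat k w) ρ hρ
    have ih0 := value_le_expCost hVN hpos hVleast strat n (k + 1) (by omega) (w ++ [false]) _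
      (isState_postState hρ ht0)
    have ih1 := value_le_expCost hVN hpos hVleast strat n (k + 1) (by omega) (w ++ [true]) _
      (isState_postState hρ ht1)
    calc V k ρ ≤ bellman L0 L1 c (V (k + 1)) k ρ (strat k w) :=
          (hVleast k (by omega) ρ hρ).2 ⟨_, rfl⟩
      _ ≤ expCost L0 L1 c φ strat (n + 1) k w ρ := by
          rw [expCost, bellman]
          gcongr

theorem exists_bellman_argmin [Nonempty 𝒰]
    (hVleast : ∀ k, k < N → ∀ ρ, IsState ρ →
      IsLeast (Set.range (bellman L0 L1 c (V (k + 1)) k ρ)) (V k ρ)) :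
    ∃ ustar : ℕ → Matrix (Fin 2) (Fin 2) ℂ → 𝒰, ∀ k, k < N → ∀ ρ, IsState ρ →
      bellman L0 L1 c (V (k + 1)) k ρ (ustar k ρ) = V k ρ := by
  have hmin : ∀ k ρ, ∃ u : 𝒰, k < N → IsState ρ → bellman L0 L1 c (V (k + 1)) k ρ u = V k ρ := by
    intro k ρ
    by_cases h : k < N ∧ IsState ρ
    · obtain ⟨u, hu⟩ := (hVleast k h.1 ρ h.2).1
      exact ⟨u, fun _ _ ↦ hu⟩
    · exact ⟨Classical.arbitrary 𝒰, fun hk hρ ↦ absurd ⟨hk, hρ⟩ h⟩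
  choose ustar hustar using hmin
  exact ⟨ustar, fun k hk ρ hρ ↦ hustar k ρ hk hρ⟩

noncomputable def markovStrategy (L0 L1 : ℕ → 𝒰 → Matrix (Fin 2) (Fin 2) ℂ)
    (pol : ℕ → Matrix (Fin 2) (Fin 2) ℂ → 𝒰) (ρ₀ : Matrix (Fin 2) (Fin 2) ℂ) :
    ℕ → List Bool → 𝒰 :=
  fun k w ↦ pol k (evolveState L0 L1 pol 0 w ρ₀)

theorem expCost_markovStrategy_eq_value (hVN : ∀ ρ, V N ρ = φ ρ)
    (hpos : ∀ k u ρ, IsState ρ → 0 < transProb (L0 k u) ρ ∧ 0 < transProb (L1 k u) ρ)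
    {ustar : ℕ → Matrix (Fin 2) (Fin 2) ℂ → 𝒰}
    (hustar : ∀ k, k < N → ∀ ρ, IsState ρ →
      bellman L0 L1 c (V (k + 1)) k ρ (ustar k ρ) = V k ρ)
    (ρ₀ : Matrix (Fin 2) (Fin 2) ℂ) :
    ∀ n k, k + n = N → ∀ w : List Bool, w.length = k →
      IsState (evolveState L0 L1 ustar 0 w ρ₀) →
      expCost L0 L1 c φ (markovStrategy L0 L1 ustar ρ₀) n k w (evolveState L0 L1 ustar 0 w ρ₀)
        = V k (evolveState L0 L1 ustar 0 w ρ₀)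
  | 0, k, hk, w, _, _ => by
    obtain rfl : k = N := by omega
    simp [expCost, hVN]
  | n + 1, k, hk, w, hw, hρ => by
    set ρ := evolveState L0 L1 ustar 0 w ρ₀
    have hstep (i : Bool) : evolveState L0 L1 ustar 0 (w ++ [i]) ρ₀
        = postState ((if i then L1 k else L0 k) (ustar k ρ)) ρ := by
      rw [evolveState_append_singleton, Nat.zero_add, hw]
    have ih (i : Bool) (hi : 0 < transProb ((if i then L1 k else L0 k) (ustar k ρ)) ρ) := by
      have := expCost_markovStrategy_eq_value hVN hpos hustar ρ₀ n (k + 1) (by omega) (w ++ [i])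
        (by simp [hw]) (by rw [hstep]; exact isState_postState hρ hi)
      rwa [hstep] at this
    obtain ⟨ht0, ht1⟩ := hpos k (ustar k ρ) ρ hρ
    have ih0 := ih false ht0
    have ih1 := ih true ht1
    simp only [Bool.false_eq_true, if_false, if_true] at ih0 ih1
    have hu : markovStrategy L0 L1 ustar ρ₀ k w = ustar k ρ := rfl
    rw [expCost, hu, ih0, ih1]
    exact hustar k (by omega) ρ hρ

end DynamicProgramming

theorem finite_horizon_dynamic_programming_general {𝒰 : Type*} [Nonempty 𝒰]
    (N : ℕ)
    (L0 L1 : ℕ → 𝒰 → Matrix (Fin 2) (Fin 2) ℂ)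
    (hpos : ∀ k u ρ, IsState ρ → 0 < transProb (L0 k u) ρ ∧ 0 < transProb (L1 k u) ρ)
    (c : ℕ → Matrix (Fin 2) (Fin 2) ℂ → 𝒰 → ℝ)
    (φ : Matrix (Fin 2) (Fin 2) ℂ → ℝ)
    (V : ℕ → Matrix (Fin 2) (Fin 2) ℂ → ℝ)
    (hVN : ∀ ρ, V N ρ = φ ρ)
    (hVleast : ∀ k, k < N → ∀ ρ, IsState ρ →
      IsLeast (Set.range (bellman L0 L1 c (V (k + 1)) k ρ)) (V k ρ)) :
    (∀ strat : ℕ → List Bool → 𝒰, ∀ ρ, IsState ρ →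
        V 0 ρ ≤ expCost L0 L1 c φ strat N 0 [] ρ)
    ∧ ∃ ustar : ℕ → Matrix (Fin 2) (Fin 2) ℂ → 𝒰,
        (∀ k, k < N → ∀ ρ, IsState ρ →
          bellman L0 L1 c (V (k + 1)) k ρ (ustar k ρ) = V k ρ)
        ∧ ∀ ρ, IsState ρ →
            expCost L0 L1 c φ
              (fun k w => ustar k (evolveState L0 L1 ustar 0 w ρ)) N 0 [] ρ = V 0 ρ := by
  obtain ⟨ustar, hustar⟩ := exists_bellman_argmin hVleast
  exact ⟨fun strat ρ hρ ↦ value_le_expCost hVN hpos hVleast strat N 0 (zero_add N) [] ρ hρ,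
    ustar, hustar,
    fun ρ hρ ↦ expCost_markovStrategy_eq_value hVN hpos hustar ρ N 0 (zero_add N) [] rfl hρ⟩

/-- Finite-horizon dynamic programming for discrete controlled quantum trajectories: the
value functions defined by the backward Bellman recursion bound from below the expected cost
of every history-dependent strategy, and the bound is attained by a Markovian strategy built
from pointwise minimizers of the Bellman expression. -/
theorem finite_horizon_dynamic_programming {𝒰 : Type*} [TopologicalSpace 𝒰]
    [CompactSpace 𝒰] [TopologicalSpace.MetrizableSpace 𝒰] [Nonempty 𝒰]
    (N : ℕ)
    (L0 L1 : ℕ → 𝒰 → Matrix (Fin 2) (Fin 2) ℂ)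
    (hL0c : ∀ k, Continuous (L0 k)) (hL1c : ∀ k, Continuous (L1 k))
    (hconstraint : ∀ k u, (L0 k u)ᴴ * L0 k u + (L1 k u)ᴴ * L1 k u = 1)
    (hpos : ∀ k u ρ, IsState ρ → 0 < transProb (L0 k u) ρ ∧ 0 < transProb (L1 k u) ρ)
    (c : ℕ → Matrix (Fin 2) (Fin 2) ℂ → 𝒰 → ℝ)
    (hc : ∀ k, Continuous fun p : Matrix (Fin 2) (Fin 2) ℂ × 𝒰 => c k p.1 p.2)
    (φ : Matrix (Fin 2) (Fin 2) ℂ → ℝ) (hφ : Continuous φ)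
    (V : ℕ → Matrix (Fin 2) (Fin 2) ℂ → ℝ)
    (hVcont : ∀ k, ContinuousOn (V k) {ρ | IsState ρ})
    (hVN : ∀ ρ, V N ρ = φ ρ)
    (hVleast : ∀ k, k < N → ∀ ρ, IsState ρ →
      IsLeast (Set.range (bellman L0 L1 c (V (k + 1)) k ρ)) (V k ρ)) :
    (∀ strat : ℕ → List Bool → 𝒰, ∀ ρ, IsState ρ →
        V 0 ρ ≤ expCost L0 L1 c φ strat N 0 [] ρ)
    ∧ ∃ ustar : ℕ → Matrix (Fin 2) (Fin 2) ℂ → 𝒰,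
        (∀ k, k < N → ∀ ρ, IsState ρ →
          bellman L0 L1 c (V (k + 1)) k ρ (ustar k ρ) = V k ρ)
        ∧ ∀ ρ, IsState ρ →
            expCost L0 L1 c φ
              (fun k w => ustar k (evolveState L0 L1 ustar 0 w ρ)) N 0 [] ρ = V 0 ρ :=
  finite_horizon_dynamic_programming_general N L0 L1 hpos c φ V hVN hVleast
end
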